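/- Let Λ be the path algebra of the cyclic quiver with p = 2 vertices, and let X be an indecomposable nilpotent Λ-module of odd length l. Set m := (l−1)/2. Then 2^m u_[X] lies in the Lie subalgebra of L̄₀(Λ)₁ generated by the elements u_[S] for S simple nilpotent Λ-modules. -/
import Mathlib


/-- Bracket of basis elements of `L̄₀(Λ)₁` for the cyclic quiver with `p` vertices:
`[u_{m(i,j)}, u_{m(f,g)}] = δ_{i+j,f} u_{m(i,j+g)} − δ_{f+g,i} u_{m(f,j+g)}`. -/
noncomputable def cyclicHallBracketBasis (p : ℕ) (x y : ZMod p × ℕ) :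
    (ZMod p × ℕ) →₀ ℤ :=
  (if x.1 + (x.2 : ZMod p) = y.1 then Finsupp.single (x.1, x.2 + y.2) (1 : ℤ) else 0) -
  (if y.1 + (y.2 : ZMod p) = x.1 then Finsupp.single (y.1, x.2 + y.2) (1 : ℤ) else 0)

/-- The Lie bracket of `L̄₀(Λ)₁`, extended bilinearly from the basis. -/
noncomputable def cyclicHallBracket (p : ℕ) (u v : (ZMod p × ℕ) →₀ ℤ) :
    (ZMod p × ℕ) →₀ ℤ :=
  u.sum fun x a => v.sum fun y c => (a * c) • cyclicHallBracketBasis p x y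

/-- Membership in the Lie subalgebra (over `ℤ`) of `L̄₀(Λ)₁` generated by a set `S`. -/
inductive InLieSpan (p : ℕ) (S : Set ((ZMod p × ℕ) →₀ ℤ)) : ((ZMod p × ℕ) →₀ ℤ) → Prop
  | of {x} : x ∈ S → InLieSpan p S x
  | zero : InLieSpan p S 0
  | add {x y} : InLieSpan p S x → InLieSpan p S y → InLieSpan p S (x + y)
  | smul (c : ℤ) {x} : InLieSpan p S x → InLieSpan p S (c • x)
  | bracket {x y} : InLieSpan p S x → InLieSpan p S y →
      InLieSpan p S (cyclicHallBracket p x y)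

-- helper: bracket of two singles
lemma bracket_single_single (p : ℕ) (x y : ZMod p × ℕ) (a c : ℤ) :
    cyclicHallBracket p (Finsupp.single x a) (Finsupp.single y c)
      = (a * c) • cyclicHallBracketBasis p x y := by
  unfold cyclicHallBracket
  rw [Finsupp.sum_single_index, Finsupp.sum_single_index]
  · simp
  · rw [Finsupp.sum_single_index] <;> simp

lemma zmod2_cast_odd (m : ℕ) : ((2*m+1 : ℕ) : ZMod 2) = 1 := by
  push_cast
  rw [show (2:ZMod 2) = 0 from rfl]
  ring

lemma inner_bracket (i : ZMod 2) :
    cyclicHallBracket 2 (Finsupp.single (i+1, 1) (1:ℤ)) (Finsupp.single (i, 1) (1:ℤ))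
      = Finsupp.single (i+1, 2) (1:ℤ) + Finsupp.single (i, 2) (-1:ℤ) := by
  rw [bracket_single_single]
  unfold cyclicHallBracketBasis
  have h1 : (i+1 : ZMod 2) + ((1:ℕ) : ZMod 2) = i := by
    have : ∀ j : ZMod 2, j + 1 + 1 = j := by decide
    simpa using this i
  have h2 : (i : ZMod 2) + ((1:ℕ) : ZMod 2) = i + 1 := by push_cast; ring
  rw [if_pos h1, if_pos h2]
  simp [sub_eq_add_neg]

lemma basis1 (i : ZMod 2) (m : ℕ) :
    cyclicHallBracketBasis 2 (i, 2*m+1) (i+1, 2) = Finsupp.single (i, 2*m+3) (1:ℤ) := by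
  unfold cyclicHallBracketBasis
  have h1 : (i : ZMod 2) + ((2*m+1 : ℕ) : ZMod 2) = i + 1 := by rw [zmod2_cast_odd]
  have h2 : ¬ ((i+1 : ZMod 2) + ((2:ℕ) : ZMod 2) = i) := by
    have : ∀ j : ZMod 2, ¬ (j + 1 + ((2:ℕ):ZMod 2) = j) := by decide
    exact this i
  rw [if_pos h1, if_neg h2]
  norm_num

lemma basis2 (i : ZMod 2) (m : ℕ) :
    cyclicHallBracketBasis 2 (i, 2*m+1) (i, 2) = - Finsupp.single (i, 2*m+3) (1:ℤ) := by
  unfold cyclicHallBracketBasis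
  have h1 : ¬ ((i : ZMod 2) + ((2*m+1 : ℕ) : ZMod 2) = i) := by
    rw [zmod2_cast_odd]
    have : ∀ j : ZMod 2, ¬ (j + 1 = j) := by decide
    exact this i
  have h2 : (i : ZMod 2) + ((2:ℕ) : ZMod 2) = i := by
    have : ∀ j : ZMod 2, j + ((2:ℕ):ZMod 2) = j := by decide
    exact this i
  rw [if_neg h1, if_pos h2]
  rw [zero_sub]
  norm_num

lemma outer_bracket (i : ZMod 2) (m : ℕ) (a : ℤ) :
    cyclicHallBracket 2 (Finsupp.single (i, 2*m+1) a)
      (Finsupp.single (i+1, 2) (1:ℤ) + Finsupp.single (i, 2) (-1:ℤ))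
      = Finsupp.single (i, 2*m+3) (2*a) := by
  unfold cyclicHallBracket
  rw [Finsupp.sum_single_index]
  · rw [Finsupp.sum_add_index']
    · rw [Finsupp.sum_single_index, Finsupp.sum_single_index]
      · rw [basis1, basis2]
        rw [Finsupp.smul_single, smul_neg, Finsupp.smul_single]
        simp only [smul_eq_mul, mul_one]
        rw [← Finsupp.single_neg]
        rw [← Finsupp.single_add]
        congr 1
        ring
      · simp
      · simp
    · intro y; simp
    · intro y c1 c2; rw [mul_add, add_smul]
  · refine Finsupp.sum_add_index' ?_ ?_ |>.trans ?_ <;> simp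


/-- For the cyclic quiver with `p = 2` vertices and an indecomposable
nilpotent module `X = m(i, l)` of odd length `l`, with `m := (l−1)/2`, the element
`2^m · u_[X]` lies in the Lie subalgebra of `L̄₀(Λ)₁` generated by the `u_[S]` for `S`
simple (the simples being the modules `m(a, 1)`). -/
theorem cyclic_basis_in_span_of_simples_two (i : ZMod 2) (l : ℕ)
    (hl : Odd l) :
    InLieSpan 2 {u | ∃ a : ZMod 2, u = Finsupp.single (a, 1) (1 : ℤ)}
      ((2 ^ ((l - 1) / 2) : ℤ) • Finsupp.single (i, l) (1 : ℤ)) := by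
  obtain ⟨m, hm⟩ := hl
  have key : ∀ (m : ℕ) (i : ZMod 2),
      InLieSpan 2 {u | ∃ a : ZMod 2, u = Finsupp.single (a, 1) (1 : ℤ)}
        (Finsupp.single (i, 2*m+1) ((2:ℤ)^m)) := by
    intro m
    induction m with
    | zero => intro i; exact InLieSpan.of ⟨i, by norm_num⟩
    | succ n ih =>
        intro i
        have h1 := ih i
        have h2 : InLieSpan 2 {u | ∃ a : ZMod 2, u = Finsupp.single (a, 1) (1 : ℤ)}
            (cyclicHallBracket 2 (Finsupp.single (i+1, 1) (1:ℤ)) (Finsupp.single (i, 1) (1:ℤ))) :=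
          InLieSpan.bracket (InLieSpan.of ⟨i+1, rfl⟩) (InLieSpan.of ⟨i, rfl⟩)
        rw [inner_bracket] at h2
        have h3 := InLieSpan.bracket h1 h2
        rw [outer_bracket] at h3
        have he : Finsupp.single ((i, 2*(n+1)+1) : ZMod 2 × ℕ) ((2:ℤ)^(n+1))
            = Finsupp.single ((i, 2*n+3) : ZMod 2 × ℕ) (2 * 2^n) := by
          rw [show 2*(n+1)+1 = 2*n+3 by omega]
          congr 1
          ring
        rw [he]
        exact h3
  have hl2 : l = 2*m+1 := by omega
  have hd : (2*m + 1 - 1) / 2 = m := by omega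
  rw [hl2, hd]
  have := key m i
  rwa [Finsupp.smul_single, smul_eq_mul, mul_one]
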